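/- Let C ⊆ ℝ⁴ be the cone generated by the vectors (1,1,0,1), (0,1,1,1), (1,0,1,1), i.e., C = {α₁(1,1,0,1) + α₂(0,1,1,1) + α₃(1,0,1,1) : α₁, α₂, α₃ ≥ 0}. Then C ∩ ℤ⁴ is not integrally convex and C is not a box-integer polyhedron. Hence a cone generated by {−1,0,+1}-vectors need not be box-integer. -/

import Mathlib

open Set Pointwise

noncomputable section

/-- Embedding of integer vectors into real vectors. -/
def coeZ {n : ℕ} (z : Fin n → ℤ) : Fin n → ℝ := fun i => (z i : ℝ)

/-- A (nonempty) polyhedron: solution set of a finite system of linear inequalities. -/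
def IsPolyhedron {n : ℕ} (P : Set (Fin n → ℝ)) : Prop :=
  P.Nonempty ∧ ∃ (m : ℕ) (A : Matrix (Fin m) (Fin n) ℝ) (b : Fin m → ℝ),
    P = {x | A.mulVec x ≤ b}

/-- The integer points of a set `P ⊆ ℝ^n`. -/
def intPts {n : ℕ} (P : Set (Fin n → ℝ)) : Set (Fin n → ℝ) :=
  {x ∈ P | ∀ i, ∃ z : ℤ, x i = (z : ℝ)}

/-- The box `{x : l ≤ x ≤ u}` with integral bounds. -/
def intBox {n : ℕ} (l u : Fin n → ℤ) : Set (Fin n → ℝ) :=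
  {x | ∀ i, (l i : ℝ) ≤ x i ∧ x i ≤ (u i : ℝ)}

/-- A set `P ⊆ ℝ^n` is box-integer if its intersection with every integral box,
whenever nonempty, equals the convex hull of its integer points. -/
def IsBoxInteger {n : ℕ} (P : Set (Fin n → ℝ)) : Prop :=
  ∀ l u : Fin n → ℤ, l ≤ u → (P ∩ intBox l u).Nonempty →
    P ∩ intBox l u = convexHull ℝ (intPts (P ∩ intBox l u))

/-- A set closed under multiplication by nonnegative scalars. -/
def IsConeSet {n : ℕ} (C : Set (Fin n → ℝ)) : Prop :=
  ∀ x ∈ C, ∀ lam : ℝ, 0 ≤ lam → lam • x ∈ C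

/-- The characteristic (recession) cone of `P`. -/
def charCone {n : ℕ} (P : Set (Fin n → ℝ)) : Set (Fin n → ℝ) :=
  {d | ∀ x ∈ P, x + d ∈ P}

/-- The integral neighborhood `N(x)` of a real vector `x`. -/
def intNbhd {n : ℕ} (x : Fin n → ℝ) : Set (Fin n → ℤ) :=
  {z | ∀ i, |x i - (z i : ℝ)| < 1}

/-- The convex hull (in `ℝ^n`) of a set of integer vectors. -/
def convZ {n : ℕ} (S : Set (Fin n → ℤ)) : Set (Fin n → ℝ) :=
  convexHull ℝ (coeZ '' S)

/-- A nonempty set `S ⊆ ℤ^n` is integrally convex if every point `x` of its convex hull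
belongs to the convex hull of `S ∩ N(x)`. -/
def IntegrallyConvex {n : ℕ} (S : Set (Fin n → ℤ)) : Prop :=
  S.Nonempty ∧ ∀ x ∈ convZ S, x ∈ convZ (S ∩ intNbhd x)

/-- An L♮-convex polyhedron, given by its standard inequality description. -/
def IsLNatPolyhedron {n : ℕ} (P : Set (Fin n → ℝ)) : Prop :=
  P.Nonempty ∧ ∃ (I J : Set (Fin n)) (E : Set (Fin n × Fin n))
    (l u : Fin n → ℤ) (dd : Fin n × Fin n → ℤ),
    P = {x | (∀ i ∈ I, (l i : ℝ) ≤ x i) ∧ (∀ j ∈ J, x j ≤ (u j : ℝ)) ∧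
             (∀ p ∈ E, x p.2 - x p.1 ≤ (dd p : ℝ))}

/-- An L²♮-convex polyhedron: the Minkowski sum of two L♮-convex polyhedra. -/
def IsL2NatPolyhedron {n : ℕ} (P : Set (Fin n → ℝ)) : Prop :=
  ∃ P₁ P₂ : Set (Fin n → ℝ), IsLNatPolyhedron P₁ ∧ IsLNatPolyhedron P₂ ∧ P = P₁ + P₂

/-- An M♮-convex set of integer vectors (exchange axiom). -/
def IsMNatSet {n : ℕ} (S : Set (Fin n → ℤ)) : Prop :=
  S.Nonempty ∧ ∀ x ∈ S, ∀ y ∈ S, ∀ i : Fin n, y i < x i →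
    ((x - Pi.single i 1 ∈ S ∧ y + Pi.single i 1 ∈ S) ∨
     ∃ j : Fin n, x j < y j ∧ x - Pi.single i 1 + Pi.single j 1 ∈ S ∧
       y + Pi.single i 1 - Pi.single j 1 ∈ S)

/-- An M♮-convex polyhedron: the convex hull of an M♮-convex set. -/
def IsMNatPolyhedron {n : ℕ} (P : Set (Fin n → ℝ)) : Prop :=
  ∃ S : Set (Fin n → ℤ), IsMNatSet S ∧ P = convZ S

/-- An L♮-convex set of integer vectors (closed under componentwise
rounded-up and rounded-down midpoints). -/
def IsLNatSet {n : ℕ} (S : Set (Fin n → ℤ)) : Prop :=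
  S.Nonempty ∧ ∀ x ∈ S, ∀ y ∈ S,
    (fun i => ⌈(x i + y i : ℚ) / 2⌉) ∈ S ∧ (fun i => ⌊(x i + y i : ℚ) / 2⌋) ∈ S

/-- An L²♮-convex set: the Minkowski sum of two L♮-convex sets. -/
def IsL2NatSet {n : ℕ} (S : Set (Fin n → ℤ)) : Prop :=
  ∃ S₁ S₂ : Set (Fin n → ℤ), IsLNatSet S₁ ∧ IsLNatSet S₂ ∧ S = S₁ + S₂

lemma cone_rel (C : Set (Fin 4 → ℝ))
    (hC : C = {x | ∃ a₁ a₂ a₃ : ℝ, 0 ≤ a₁ ∧ 0 ≤ a₂ ∧ 0 ≤ a₃ ∧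
      x = a₁ • ![(1:ℝ),1,0,1] + a₂ • ![(0:ℝ),1,1,1] + a₃ • ![(1:ℝ),0,1,1]}) :
    ∀ x ∈ C, x 0 + x 1 + x 2 = 2 * x 3 := by
  subst hC
  rintro x ⟨a₁, a₂, a₃, _, _, _, rfl⟩
  simp [Pi.add_apply, Pi.smul_apply]
  ring

/-- The cone generated by `(1,1,0,1), (0,1,1,1), (1,0,1,1)` in `ℝ⁴` has
non-integrally-convex integer points and is not box-integer; hence a cone generated by
`{-1,0,+1}`-vectors need not be box-integer. -/
theorem cone_of_zeroOne_vectors_not_boxInteger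
    (C : Set (Fin 4 → ℝ))
    (hC : C = {x | ∃ a₁ a₂ a₃ : ℝ, 0 ≤ a₁ ∧ 0 ≤ a₂ ∧ 0 ≤ a₃ ∧
      x = a₁ • ![(1:ℝ),1,0,1] + a₂ • ![(0:ℝ),1,1,1] + a₃ • ![(1:ℝ),0,1,1]}) :
    ¬ IntegrallyConvex {z : Fin 4 → ℤ | coeZ z ∈ C} ∧ ¬ IsBoxInteger C := by
  have hrel := cone_rel C hC
  set x₀ : Fin 4 → ℝ := ![(1:ℝ),1,1,3/2] with hx₀def
  have hx0 : x₀ ∈ C := by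
    rw [hC]
    refine ⟨1/2, 1/2, 1/2, by norm_num, by norm_num, by norm_num, ?_⟩
    funext i
    fin_cases i <;> norm_num [hx₀def]
  have h0C : (0 : Fin 4 → ℝ) ∈ C := by
    rw [hC]
    exact ⟨0, 0, 0, le_refl _, le_refl _, le_refl _, by simp⟩
  have hwC : ![(2:ℝ),2,2,3] ∈ C := by
    rw [hC]
    refine ⟨1, 1, 1, zero_le_one, zero_le_one, zero_le_one, ?_⟩
    funext i
    fin_cases i <;> norm_num
  constructor
  · rintro ⟨-, h⟩
    have hx₀mem : x₀ ∈ convZ {z : Fin 4 → ℤ | coeZ z ∈ C} := by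
      have h0 : (0 : Fin 4 → ℝ) ∈ coeZ '' {z : Fin 4 → ℤ | coeZ z ∈ C} := by
        refine ⟨0, ?_, ?_⟩
        · show coeZ 0 ∈ C
          have he : coeZ (0 : Fin 4 → ℤ) = (0 : Fin 4 → ℝ) := by
            funext i; simp [coeZ]
          rwa [he]
        · funext i; simp [coeZ]
      have hw : ![(2:ℝ),2,2,3] ∈ coeZ '' {z : Fin 4 → ℤ | coeZ z ∈ C} := by
        refine ⟨![2,2,2,3], ?_, ?_⟩
        · show coeZ ![2,2,2,3] ∈ C
          have he : coeZ (![2,2,2,3] : Fin 4 → ℤ) = ![(2:ℝ),2,2,3] := by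
            funext i; fin_cases i <;> simp [coeZ]
          rwa [he]
        · funext i; fin_cases i <;> simp [coeZ]
      have hseg : x₀ ∈ segment ℝ (0 : Fin 4 → ℝ) ![(2:ℝ),2,2,3] := by
        refine ⟨1/2, 1/2, by norm_num, by norm_num, by norm_num, ?_⟩
        funext i
        fin_cases i <;> norm_num [hx₀def]
      exact segment_subset_convexHull h0 hw hseg
    have hempty : {z : Fin 4 → ℤ | coeZ z ∈ C} ∩ intNbhd x₀ = ∅ := by
      rw [Set.eq_empty_iff_forall_notMem]
      rintro z ⟨hzC, hzN⟩
      have h₀ := hzN 0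
      have h₁ := hzN 1
      have h₂ := hzN 2
      have hx0' : x₀ 0 = 1 := by norm_num [hx₀def]
      have hx1' : x₀ 1 = 1 := by norm_num [hx₀def]
      have hx2' : x₀ 2 = 1 := by rfl
      rw [hx0', abs_lt] at h₀
      rw [hx1', abs_lt] at h₁
      rw [hx2', abs_lt] at h₂
      have hz0 : z 0 = 1 := by
        have a1 : (0:ℤ) < z 0 := by exact_mod_cast (by linarith [h₀.2] : (0:ℝ) < (z 0 : ℝ))
        have a2 : z 0 < 2 := by exact_mod_cast (by linarith [h₀.1] : ((z 0 : ℝ)) < 2)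
        omega
      have hz1 : z 1 = 1 := by
        have a1 : (0:ℤ) < z 1 := by exact_mod_cast (by linarith [h₁.2] : (0:ℝ) < (z 1 : ℝ))
        have a2 : z 1 < 2 := by exact_mod_cast (by linarith [h₁.1] : ((z 1 : ℝ)) < 2)
        omega
      have hz2 : z 2 = 1 := by
        have a1 : (0:ℤ) < z 2 := by exact_mod_cast (by linarith [h₂.2] : (0:ℝ) < (z 2 : ℝ))
        have a2 : z 2 < 2 := by exact_mod_cast (by linarith [h₂.1] : ((z 2 : ℝ)) < 2)
        omega
      have hr := hrel (coeZ z) hzC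
      have hr' : (z 0 : ℝ) + z 1 + z 2 = 2 * z 3 := hr
      rw [hz0, hz1, hz2] at hr'
      have : (3:ℤ) = 2 * z 3 := by exact_mod_cast hr'
      omega
    have := h x₀ hx₀mem
    rw [hempty] at this
    simp [convZ] at this
  · intro hBI
    have hle : (0 : Fin 4 → ℤ) ≤ ![1,1,1,2] := by
      intro i; fin_cases i <;> simp
    have hx₀box : x₀ ∈ intBox (0 : Fin 4 → ℤ) ![1,1,1,2] := by
      intro i; fin_cases i <;> norm_num [hx₀def]
    have hne : (C ∩ intBox (0 : Fin 4 → ℤ) ![1,1,1,2]).Nonempty := ⟨x₀, hx0, hx₀box⟩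
    have heq := hBI 0 ![1,1,1,2] hle hne
    have hx₀in : x₀ ∈ convexHull ℝ (intPts (C ∩ intBox (0 : Fin 4 → ℤ) ![1,1,1,2])) := by
      rw [← heq]; exact ⟨hx0, hx₀box⟩
    have hsub : intPts (C ∩ intBox (0 : Fin 4 → ℤ) ![1,1,1,2]) ⊆ {y : Fin 4 → ℝ | y 3 ≤ 1} := by
      rintro y ⟨⟨hyC, hybox⟩, hyint⟩
      obtain ⟨n, hn⟩ := hyint 3
      have h03 := hrel y hyC
      have hb0 : y 0 ≤ 1 := by have := (hybox 0).2; norm_num at this; exact this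
      have hb1 : y 1 ≤ 1 := by have := (hybox 1).2; norm_num at this; exact this
      have hb2 : y 2 ≤ 1 := by have := (hybox 2).2; change y 2 ≤ ((1:ℤ):ℝ) at this; norm_num at this; exact this
      have h2n : 2 * (n : ℝ) ≤ 3 := by rw [← hn]; linarith
      have h2n' : 2 * n ≤ (3:ℤ) := by exact_mod_cast h2n
      have : n ≤ 1 := by omega
      show y 3 ≤ 1
      rw [hn]
      exact_mod_cast this
    have hconv : Convex ℝ {y : Fin 4 → ℝ | y 3 ≤ 1} :=
      convex_halfSpace_le ⟨fun a b => rfl, fun c a => rfl⟩ 1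
    have hfin := convexHull_min hsub hconv hx₀in
    have hle' : x₀ 3 ≤ 1 := hfin
    norm_num [hx₀def] at hle'
    change (3/2 : ℝ) ≤ 1 at hle'
    norm_num at hle'
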